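/- arXiv:2504.13819 — 4 statements merged into one kernel-verified Lean document; each statement's English description precedes it below -/
import Mathlib

section
/- Let p, q_i, q_j be three distinct points in the plane with |p q_i| ≤ |p q_j| and ∠q_j q_i p < π/3 (the angle at vertex q_i). Then |q_i q_j| > |q_i p|, i.e., p is strictly closer to q_i than q_j is. -/
open EuclideanGeometry

/-- If `|p qᵢ| ≤ |p qⱼ|` and the angle at `qᵢ` in triangle `qⱼ qᵢ p` is less than `π/3`,
then `p` is strictly closer to `qᵢ` than `qⱼ` is. -/
theorem stmt_1 (p qi qj : EuclideanSpace ℝ (Fin 2))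
    (hpi : p ≠ qi) (hpj : p ≠ qj) (hij : qi ≠ qj)
    (hdist : dist p qi ≤ dist p qj)
    (hangle : ∠ qj qi p < Real.pi / 3) :
    dist qi p < dist qi qj := by
  have hlaw := EuclideanGeometry.law_cos qj qi p
  have hb : 0 < dist qi p := dist_pos.2 (Ne.symm hpi)
  have ha : 0 < dist qi qj := dist_pos.2 hij
  have hcos : (1 : ℝ) / 2 < Real.cos (∠ qj qi p) := by
    have h0 : 0 ≤ ∠ qj qi p := EuclideanGeometry.angle_nonneg _ _ _
    have := Real.cos_lt_cos_of_nonneg_of_le_pi h0 (by linarith [Real.pi_pos]) hangle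
    simpa [Real.cos_pi_div_three] using this
  by_contra hle
  push_neg at hle
  rw [dist_comm qj qi, dist_comm p qi, dist_comm qj p] at hlaw
  have hcb : dist qi p ≤ dist p qj := by rw [dist_comm p qi] at hdist; exact hdist
  have hbb : dist qi p * dist qi p ≤ dist p qj * dist p qj :=
    mul_self_le_mul_self hb.le hcb
  nlinarith [hlaw, hbb, hle, ha, hb, hcos, mul_pos ha hb,
    mul_nonneg ha.le (sub_nonneg.2 hle),
    mul_pos (mul_pos ha hb) (by linarith : (0:ℝ) < Real.cos (∠ qj qi p) - 1/2)]
end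

section
/- Let k = 2m+1 with m odd, z = exp(iπ/k), p_j = z^{4j} for 0 ≤ j < m and p_m = z^{2k−3}. Then for every 0 ≤ j₁ < m, the direction of p_m − p_{j₁} is z raised to an odd integer power (namely z^{2j₁+k+(k−3)/2} with odd exponent), i.e., p_m lies on the bisector of one of the k-sectors based at p_{j₁}. -/
open Complex

/-- For `k = 2m+1` with `m` odd, `z = exp(iπ/k)`, `p_j = z^{4j}` for `j < m` and
`p_m = z^{2k−3}`: for every `j₁ < m`, the direction of `p_m − p_{j₁}` is `z` raised to the
odd integer power `2j₁ + k + (k−3)/2`, i.e. `p_m` lies on the bisector of one of the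
`k`-sectors based at `p_{j₁}`. -/
theorem stmt_10 (k m : ℕ) (hm : Odd m) (hk : k = 2 * m + 1)
    (z : ℂ) (hz : z = Complex.exp (Real.pi * Complex.I / k))
    (j₁ : ℕ) (hj₁ : j₁ < m) :
    Odd (2 * j₁ + k + (k - 3) / 2) ∧
    ∃ r : ℝ, 0 < r ∧
      z ^ (2 * k - 3) - z ^ (4 * j₁) = (r : ℂ) * z ^ (2 * j₁ + k + (k - 3) / 2) := by
  obtain ⟨l, hl⟩ := hm
  have hm1 : 1 ≤ m := by omega
  subst hk hz
  constructor
  · exact ⟨j₁ + 3 * l + 1, by omega⟩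
  · set α : ℝ := ((m : ℝ) - 1 - 2 * j₁) * Real.pi / (2 * m + 1) with hα
    have hk0 : (0 : ℝ) < 2 * m + 1 := by positivity
    have hj₁' : (j₁ : ℝ) ≤ (m : ℝ) - 1 := by
      have : (j₁ : ℝ) + 1 ≤ m := by exact_mod_cast hj₁
      linarith
    have hj₁0 : (0 : ℝ) ≤ (j₁ : ℝ) := Nat.cast_nonneg _
    have hcos : 0 < Real.cos α := by
      apply Real.cos_pos_of_mem_Ioo
      constructor
      · rw [hα, lt_div_iff₀ hk0]
        nlinarith [Real.pi_pos]
      · rw [hα, div_lt_iff₀ hk0]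
        nlinarith [Real.pi_pos]
    refine ⟨2 * Real.cos α, by positivity, ?_⟩
    have e1 : 2 * (2 * m + 1) - 3 = 4 * m - 1 := by omega
    have e2 : 2 * j₁ + (2 * m + 1) + (2 * (m : ℕ) + 1 - 3) / 2 = 2 * j₁ + 3 * m := by omega
    rw [e1, e2]
    set w : ℂ := (Real.pi : ℂ) * I / ((2 * m + 1 : ℕ) : ℂ) with hw
    have hzn : ∀ n : ℕ, Complex.exp w ^ n = Complex.exp ((n : ℂ) * w) := fun n => by
      rw [← Complex.exp_nat_mul]
    rw [hzn, hzn, hzn]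
    have hkC : ((2 * m + 1 : ℕ) : ℂ) ≠ 0 := Nat.cast_ne_zero.mpr (by omega)
    have h21 : (2 * (m : ℂ) + 1) ≠ 0 := by
      have : ((2 * m + 1 : ℕ) : ℂ) = 2 * (m : ℂ) + 1 := by push_cast; ring
      rw [← this]; exact hkC
    have hαC : (α : ℂ) = ((m : ℂ) - 1 - 2 * j₁) * (Real.pi : ℂ) / ((2 * m + 1 : ℕ) : ℂ) := by
      rw [hα]; push_cast; ring
    have h1 : ((4 * m - 1 : ℕ) : ℂ) * w = ((2 * j₁ + 3 * m : ℕ) : ℂ) * w + (α : ℂ) * I := by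
      rw [hαC, hw]
      push_cast [Nat.cast_sub (by omega : 1 ≤ 4 * m)]
      field_simp
      ring
    have h2 : ((4 * j₁ : ℕ) : ℂ) * w
        = ((2 * j₁ + 3 * m : ℕ) : ℂ) * w + (-(α : ℂ)) * I + (Real.pi : ℂ) * (-1 : ℂ) * I := by
      rw [hαC, hw]
      push_cast
      field_simp [h21]
      ring
    rw [h1, h2, Complex.exp_add, Complex.exp_add, Complex.exp_add]
    have hexpI : ∀ x : ℝ, Complex.exp ((x : ℂ) * I) = (Real.cos x : ℂ) + (Real.sin x : ℂ) * I :=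
      fun x => by rw [Complex.exp_mul_I, Complex.ofReal_cos, Complex.ofReal_sin]
    have hpi : Complex.exp ((Real.pi : ℂ) * (-1 : ℂ) * I) = -1 := by
      rw [show (Real.pi : ℂ) * (-1 : ℂ) * I = -(Real.pi * I) by ring, Complex.exp_neg,
        Complex.exp_pi_mul_I]
      norm_num
    have hc1 := hexpI α
    have hc2 : Complex.exp ((-(α : ℂ)) * I) = (Real.cos α : ℂ) - (Real.sin α : ℂ) * I := by
      rw [show (-(α : ℂ)) * I = ((-α : ℝ) : ℂ) * I by push_cast; ring, hexpI,
        Real.cos_neg, Real.sin_neg]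
      push_cast; ring
    rw [hc1, hc2, hpi]
    push_cast
    ring
end

section
/- Let p be a point in the plane, and let r₁, r₂, r₃, r₄ be four distinct rays from p, listed counterclockwise, with angles α_i = ∠(r_i, r_{i+1}) (indices mod 4). Suppose α₁ = α₃ and α₂ < π and α₄ < π. Let C₂ be the closed cone between r₂ and r₃ and C₄ the closed cone between r₄ and r₁, and let σ be any closed strip of width 1 containing p whose boundary lines are perpendicular to the common angle bisector direction of C₂ and C₄. Then every point of σ ∩ (C₂ ∪ C₄) is at distance at most max(1/cos(α₂/2), 1/cos(α₄/2)) from p. -/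
open Complex ComplexConjugate

/-!
Write `x - p = t e^{iθ}`. The strip bounds the projection `t cos (θ - γ)` of `x - p` onto the
bisector direction `γ` by `1` in absolute value. In `C₂` the angle `θ - γ` is at most `α₂/2` in
absolute value; in `C₄`, because `α₁ = α₃`, the bisector of `C₄` is `γ + π` and `θ - (γ + π)` is
at most `α₄/2` in absolute value. As both half-angles are below `π/2`, `t ≤ 1 / cos (αᵢ/2)`.
-/

theorem Real.le_one_div_cos_of_mul_cos_le {t ψ δ : ℝ} (ht : 0 ≤ t) (hψ : |ψ| ≤ δ)
    (hδ : δ < Real.pi / 2) (h : t * Real.cos ψ ≤ 1) : t ≤ 1 / Real.cos δ := by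
  have hδ₀ : 0 ≤ δ := (abs_nonneg ψ).trans hψ
  have hcos_pos : 0 < Real.cos δ := Real.cos_pos_of_mem_Ioo ⟨by linarith, hδ⟩
  have hcos_le : Real.cos δ ≤ Real.cos ψ := by
    rw [← Real.cos_abs ψ]
    exact Real.cos_le_cos_of_nonneg_of_le_pi (abs_nonneg ψ) (by linarith [Real.pi_pos]) hψ
  rw [le_div_iff₀ hcos_pos]
  nlinarith

theorem Complex.re_mul_conj_exp_mul_I (t θ φ : ℝ) :
    ((t : ℂ) * exp (θ * I) * conj (exp (φ * I))).re = t * Real.cos (θ - φ) := by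
  rw [← exp_conj, map_mul, conj_I, conj_ofReal, mul_assoc, ← exp_add,
    show (θ : ℂ) * I + φ * -I = ((θ - φ : ℝ) : ℂ) * I by push_cast; ring,
    re_ofReal_mul, exp_ofReal_mul_I_re]

theorem Complex.norm_le_one_div_cos_of_re_mul_conj_exp_le {z : ℂ} {t θ φ δ : ℝ} (ht : 0 ≤ t)
    (hz : z = t * exp (θ * I)) (hθ : |θ - φ| ≤ δ) (hδ : δ < Real.pi / 2)
    (h : (z * conj (exp (φ * I))).re ≤ 1) : ‖z‖ ≤ 1 / Real.cos δ := by
  have hnorm : ‖z‖ = t := by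
    rw [hz, norm_mul, norm_exp_ofReal_mul_I, norm_real, Real.norm_of_nonneg ht, mul_one]
  rw [hz, re_mul_conj_exp_mul_I] at h
  rw [hnorm]
  exact Real.le_one_div_cos_of_mul_cos_le ht hθ hδ h

theorem Complex.conj_exp_add_pi_mul_I (φ : ℝ) :
    conj (exp (((φ + Real.pi : ℝ) : ℂ) * I)) = -conj (exp (φ * I)) := by
  rw [ofReal_add, add_mul, exp_add_pi_mul_I, map_neg]

theorem stmt_13_general (p : ℂ) (β₁ β₂ β₃ β₄ : ℝ)
    (hα13 : β₂ - β₁ = β₄ - β₃)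
    (hα2 : β₃ - β₂ < Real.pi) (hα4 : β₁ + 2 * Real.pi - β₄ < Real.pi)
    (c : ℝ) (hc0 : c ≤ 0) (hc1 : 0 ≤ c + 1)
    (x : ℂ)
    -- `x` lies in the strip of width 1, perpendicular to the bisector direction
    -- `γ = (β₂+β₃)/2`, which contains `p` (since `c ≤ 0 ≤ c+1`):
    (hstrip₁ : c ≤ ((x - p) * (starRingEnd ℂ) (Complex.exp (((β₂ + β₃) / 2 : ℝ) * Complex.I))).re)
    (hstrip₂ : ((x - p) * (starRingEnd ℂ) (Complex.exp (((β₂ + β₃) / 2 : ℝ) * Complex.I))).re ≤ c + 1)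
    -- `x` lies in the closed cone `C₂` or in the closed cone `C₄`:
    (hcone : ∃ t θ : ℝ, 0 ≤ t ∧ x - p = (t : ℂ) * Complex.exp ((θ : ℝ) * Complex.I) ∧
      ((β₂ ≤ θ ∧ θ ≤ β₃) ∨ (β₄ ≤ θ ∧ θ ≤ β₁ + 2 * Real.pi))) :
    dist x p ≤ max (1 / Real.cos ((β₃ - β₂) / 2))
      (1 / Real.cos ((β₁ + 2 * Real.pi - β₄) / 2)) := by
  obtain ⟨t, θ, ht, hx, hθ | hθ⟩ := hcone
  · refine (le_max_left _ _).trans' ?_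
    rw [dist_eq]
    refine norm_le_one_div_cos_of_re_mul_conj_exp_le ht hx ?_ (by linarith) (by linarith)
    rw [abs_le]
    constructor <;> linarith
  · refine (le_max_right _ _).trans' ?_
    rw [dist_eq]
    refine norm_le_one_div_cos_of_re_mul_conj_exp_le (φ := (β₂ + β₃) / 2 + Real.pi) ht hx ?_
      (by linarith) ?_
    · rw [abs_le]
      constructor <;> linarith
    · rw [conj_exp_add_pi_mul_I, mul_neg, neg_re]
      linarith

/-- Strip lemma. Four rays from `p` at directions `β₁ < β₂ < β₃ < β₄ < β₁ + 2π`
(counterclockwise), with angles `α₁ = β₂−β₁`, `α₂ = β₃−β₂`, `α₃ = β₄−β₃`,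
`α₄ = β₁+2π−β₄`. Assume `α₁ = α₃`, `α₂ < π` and `α₄ < π`. Then the cones
`C₂` (between `r₂` and `r₃`) and `C₄` (between `r₄` and `r₁`) have a common bisector line of
direction `γ = (β₂+β₃)/2`, and for any closed strip of width `1` containing `p` whose
boundary lines are perpendicular to this bisector direction, every point of
`σ ∩ (C₂ ∪ C₄)` is at distance at most `max (1/cos(α₂/2)) (1/cos(α₄/2))` from `p`. -/
theorem stmt_13 (p : ℂ) (β₁ β₂ β₃ β₄ : ℝ)
    (h12 : β₁ < β₂) (h23 : β₂ < β₃) (h34 : β₃ < β₄) (h41 : β₄ < β₁ + 2 * Real.pi)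
    (hα13 : β₂ - β₁ = β₄ - β₃)
    (hα2 : β₃ - β₂ < Real.pi) (hα4 : β₁ + 2 * Real.pi - β₄ < Real.pi)
    (c : ℝ) (hc0 : c ≤ 0) (hc1 : 0 ≤ c + 1)
    (x : ℂ)
    -- `x` lies in the strip of width 1, perpendicular to the bisector direction
    -- `γ = (β₂+β₃)/2`, which contains `p` (since `c ≤ 0 ≤ c+1`):
    (hstrip₁ : c ≤ ((x - p) * (starRingEnd ℂ) (Complex.exp (((β₂ + β₃) / 2 : ℝ) * Complex.I))).re)
    (hstrip₂ : ((x - p) * (starRingEnd ℂ) (Complex.exp (((β₂ + β₃) / 2 : ℝ) * Complex.I))).re ≤ c + 1)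
    -- `x` lies in the closed cone `C₂` or in the closed cone `C₄`:
    (hcone : ∃ t θ : ℝ, 0 ≤ t ∧ x - p = (t : ℂ) * Complex.exp ((θ : ℝ) * Complex.I) ∧
      ((β₂ ≤ θ ∧ θ ≤ β₃) ∨ (β₄ ≤ θ ∧ θ ≤ β₁ + 2 * Real.pi))) :
    dist x p ≤ max (1 / Real.cos ((β₃ - β₂) / 2))
      (1 / Real.cos ((β₁ + 2 * Real.pi - β₄) / 2)) :=
  stmt_13_general p β₁ β₂ β₃ β₄ hα13 hα2 hα4 c hc0 hc1 x hstrip₁ hstrip₂ hcone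
end

section
/- Let p₁, p₂, p₃ be vertices of a triangle in the plane such that the angle at p₃ contains in its interior one of the k-sector boundary directions; equivalently, p₁ and p₂ lie in different (open) k-sectors of p₃. Then in the ordered Yao graph with order p₁, p₂, p₃ followed by any ordering of the remaining points, the vertices p₁, p₂, p₃ form a triangle (a clique of size 3). -/
set_option maxHeartbeats 1000000
open Complex

/-- `q` lies in the `s`-th of the `k` sectors based at `p`. -/
def InSector (k s : ℕ) (p q : ℂ) : Prop :=
  p ≠ q ∧ ∃ m : ℤ,
    2 * Real.pi * s / k ≤ (q - p).arg + 2 * Real.pi * m ∧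
    (q - p).arg + 2 * Real.pi * m < 2 * Real.pi * (s + 1) / k

/-- In the `k`-sector ordered Yao graph on the ordered points `pts`, there is an edge from
vertex `i` to vertex `j` iff `j` precedes `i` and `j` is a closest predecessor of `i` in
some sector of `i`. -/
def YaoEdge (k n : ℕ) (pts : Fin n → ℂ) (i j : Fin n) : Prop :=
  j < i ∧ ∃ s, s < k ∧ InSector k s (pts i) (pts j) ∧
    ∀ j' : Fin n, j' < i → InSector k s (pts i) (pts j') →
      dist (pts i) (pts j) ≤ dist (pts i) (pts j')

lemma exists_sector (k : ℕ) (hk : 0 < k) (p q : ℂ) (hpq : p ≠ q) :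
    ∃ s, s < k ∧ InSector k s p q := by
  set x := (q - p).arg with hx
  have hx1 : -Real.pi < x := Complex.neg_pi_lt_arg _
  have hx2 : x ≤ Real.pi := Complex.arg_le_pi _
  have hpi : (0:ℝ) < Real.pi := Real.pi_pos
  have hkR : (0:ℝ) < k := by exact_mod_cast hk
  set m : ℤ := if 0 ≤ x then 0 else 1 with hm
  have ht0 : 0 ≤ x + 2 * Real.pi * m := by
    rcases le_or_gt 0 x with h | h
    · simp only [hm, if_pos h]; push_cast; linarith
    · simp only [hm, if_neg (not_le.2 h)]; push_cast; linarith
  have ht2 : x + 2 * Real.pi * m < 2 * Real.pi := by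
    rcases le_or_gt 0 x with h | h
    · simp only [hm, if_pos h]; push_cast; linarith
    · simp only [hm, if_neg (not_le.2 h)]; push_cast; linarith
  set t := x + 2 * Real.pi * m with htdef
  set y := (k : ℝ) * t / (2 * Real.pi) with hy
  have hy0 : 0 ≤ y := by positivity
  set s : ℕ := ⌊y⌋.toNat with hs
  have hsc : (s : ℝ) = (⌊y⌋ : ℝ) := by
    exact_mod_cast Int.toNat_of_nonneg (Int.floor_nonneg.2 hy0)
  have h1 : (s : ℝ) ≤ y := by rw [hsc]; exact Int.floor_le y
  have h2 : y < s + 1 := by rw [hsc]; exact Int.lt_floor_add_one y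
  have hyk : y < k := by
    rw [hy, div_lt_iff₀ (by positivity)]
    nlinarith
  have hsk : s < k := by exact_mod_cast h1.trans_lt hyk
  refine ⟨s, hsk, hpq, m, ?_, ?_⟩
  · rw [← hx, div_le_iff₀ hkR]
    rw [hy, le_div_iff₀ (by positivity)] at h1
    nlinarith
  · rw [← hx, lt_div_iff₀ hkR]
    rw [hy, div_lt_iff₀ (by positivity)] at h2
    nlinarith

lemma sector_unique (k s s' : ℕ) (hs : s < k) (hs' : s' < k) (p q : ℂ)
    (h : InSector k s p q) (h' : InSector k s' p q) : s = s' := by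
  obtain ⟨-, m, h1, h2⟩ := h
  obtain ⟨-, m', h1', h2'⟩ := h'
  set x := (q - p).arg with hx
  have hpi : (0:ℝ) < Real.pi := Real.pi_pos
  have hk0 : 0 < k := by omega
  have hkR : (0:ℝ) < k := by exact_mod_cast hk0
  have hub : ∀ a : ℕ, a < k → 2 * Real.pi * (a + 1) / k ≤ 2 * Real.pi := by
    intro a ha
    rw [div_le_iff₀ hkR]
    have : (a:ℝ) + 1 ≤ k := by exact_mod_cast ha
    nlinarith
  have hlb : ∀ a : ℕ, (0:ℝ) ≤ 2 * Real.pi * a / k := by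
    intro a; positivity
  have T0 : 0 ≤ x + 2 * Real.pi * m := le_trans (hlb s) h1
  have T2 : x + 2 * Real.pi * m < 2 * Real.pi := h2.trans_le (hub s hs)
  have T0' : 0 ≤ x + 2 * Real.pi * m' := le_trans (hlb s') h1'
  have T2' : x + 2 * Real.pi * m' < 2 * Real.pi := h2'.trans_le (hub s' hs')
  have hmm : m = m' := by
    have e1 : ((m - m' : ℤ) : ℝ) < 1 := by push_cast; nlinarith
    have e2 : (-1 : ℝ) < ((m - m' : ℤ) : ℝ) := by push_cast; nlinarith
    have e1' : (m - m' : ℤ) < 1 := by exact_mod_cast e1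
    have e2' : (-1 : ℤ) < m - m' := by exact_mod_cast e2
    omega
  subst hmm
  have key : ∀ (a b : ℕ) (T : ℝ), 2 * Real.pi * a / k ≤ T →
      T < 2 * Real.pi * (b + 1) / k → a ≤ b := by
    intro a b T hA hB
    by_contra hab
    have : (b:ℝ) + 1 ≤ a := by exact_mod_cast Nat.succ_le_of_lt (not_le.1 hab)
    have : 2 * Real.pi * (b + 1) / k ≤ 2 * Real.pi * a / k := by gcongr
    linarith
  exact le_antisymm (key s s' _ h1 h2') (key s' s _ h1' h2)

/-- If the first two points `p₁, p₂` lie in different `k`-sectors of the third point `p₃`,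
then in the ordered Yao graph with order `p₁, p₂, p₃, …` (any continuation), the vertices
`p₁, p₂, p₃` form a triangle. -/
theorem stmt_18 (k n : ℕ) (hk : 0 < k) (hn : 3 ≤ n)
    (pts : Fin n → ℂ) (hinj : Function.Injective pts)
    (hsec : ∃ s₁ s₂, s₁ < k ∧ s₂ < k ∧ s₁ ≠ s₂ ∧
      InSector k s₁ (pts ⟨2, by omega⟩) (pts ⟨0, by omega⟩) ∧
      InSector k s₂ (pts ⟨2, by omega⟩) (pts ⟨1, by omega⟩)) :
    YaoEdge k n pts ⟨1, by omega⟩ ⟨0, by omega⟩ ∧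
    YaoEdge k n pts ⟨2, by omega⟩ ⟨0, by omega⟩ ∧
    YaoEdge k n pts ⟨2, by omega⟩ ⟨1, by omega⟩ := by
  obtain ⟨s₁, s₂, hs₁, hs₂, hne, hin₁, hin₂⟩ := hsec
  have h01 : pts ⟨1, by omega⟩ ≠ pts ⟨0, by omega⟩ := by
    intro h; exact absurd (hinj h) (by simp [Fin.ext_iff])
  refine ⟨⟨Fin.mk_lt_mk.2 one_pos, ?_⟩, ⟨Fin.mk_lt_mk.2 two_pos, ?_⟩, ⟨Fin.mk_lt_mk.2 one_lt_two, ?_⟩⟩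
  · obtain ⟨s, hsk, hin⟩ := exists_sector k hk _ _ h01
    refine ⟨s, hsk, hin, fun j' hj' _ => ?_⟩
    have : j' = ⟨0, by omega⟩ := by
      have := hj'; rw [Fin.lt_def] at this
      exact Fin.ext (by simpa using Nat.lt_one_iff.1 this)
    rw [this]
  · refine ⟨s₁, hs₁, hin₁, fun j' hj' hin' => ?_⟩
    rw [Fin.lt_def] at hj'
    have hj2 : j'.val < 2 := by simpa using hj'
    rcases (by omega : j'.val = 0 ∨ j'.val = 1) with h | h
    · have : j' = ⟨0, by omega⟩ := Fin.ext h
      rw [this]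
    · have hj1 : j' = ⟨1, by omega⟩ := Fin.ext h
      rw [hj1] at hin'
      exact absurd (sector_unique k s₁ s₂ hs₁ hs₂ _ _ hin' hin₂) hne
  · refine ⟨s₂, hs₂, hin₂, fun j' hj' hin' => ?_⟩
    rw [Fin.lt_def] at hj'
    have hj2 : j'.val < 2 := by simpa using hj'
    rcases (by omega : j'.val = 0 ∨ j'.val = 1) with h | h
    · have hj0 : j' = ⟨0, by omega⟩ := Fin.ext h
      rw [hj0] at hin'
      exact absurd (sector_unique k s₁ s₂ hs₁ hs₂ _ _ hin₁ hin') hne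
    · have : j' = ⟨1, by omega⟩ := Fin.ext h
      rw [this]
end
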